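/- For every simple graph G on n vertices and every natural number k with 1 ≤ k ≤ n, there exists an incomplete table T with n tuples over a schema of n+1 attributes R = {X} ∪ Y (with |Y| = n), in which the X-column contains n pairwise distinct non-⊥ values, such that G contains a clique of size k if and only if g3({X} ×_sp Y) ≤ 1 − k/n. -/

import Mathlib

/- Common framework: incomplete tables, strongly possible worlds and constraints.
   A tuple assigns each attribute a value in `Option V`, with `none` encoding the
   null marker ⊥.  In the degenerate case of an attribute whose active domain is
   empty, the fresh symbol `s` (outside all domains) is encoded by `none` in the
   strongly possible world: it is a single fixed symbol, equal only to itself and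
   different from every domain value, exactly as `none` behaves. -/

namespace SPDB

variable {α V : Type} [DecidableEq α] [DecidableEq V]

/-- A tuple over attribute type `α` with values in `V`; `none` is the null ⊥. -/
abbrev Tuple (α V : Type) := α → Option V

/-- An incomplete table: a finite multiset of tuples. -/
abbrev Table (α V : Type) := Multiset (Tuple α V)

/-- The active domain of attribute `A` in table `T`: the non-null values in column `A`. -/
def VD (T : Table α V) (A : α) : Finset V :=
  (T.filterMap fun t => t A).toFinset

/-- `t'` is a strongly possible extension of `t` w.r.t. the active domains of `T`:
non-null entries are kept, each null is replaced by an active domain value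
(by the fresh symbol, encoded `none`, if the active domain is empty). -/
def spExt (T : Table α V) (t t' : Tuple α V) : Prop :=
  ∀ A, (t A ≠ none → t' A = t A) ∧
       (t A = none → if (VD T A).Nonempty then ∃ v ∈ VD T A, t' A = some v
                     else t' A = none)

/-- `T'` is a strongly possible world of `T`. -/
def spWorld (T T' : Table α V) : Prop := Multiset.Rel (spExt T) T T'

/-- Two tuples agree on the attribute set `X`. -/
def agrees (X : Finset α) (t1 t2 : Tuple α V) : Prop := ∀ A ∈ X, t1 A = t2 A

/-- Weak similarity on the attribute set `X`. -/
def weakSim (X : Finset α) (t1 t2 : Tuple α V) : Prop :=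
  ∀ A ∈ X, t1 A = t2 A ∨ t1 A = none ∨ t2 A = none

/-- `t` is `X`-total: no nulls among the attributes of `X`. -/
def isTotal (X : Finset α) (t : Tuple α V) : Prop := ∀ A ∈ X, t A ≠ none

instance (X : Finset α) : DecidablePred (isTotal (V := V) X) := fun t =>
  decidable_of_iff (∀ A ∈ X, t A ≠ none) Iff.rfl

/-- Projection of a tuple to the attribute set `X` (nulls outside `X`). -/
def proj (X : Finset α) (t : Tuple α V) : Tuple α V :=
  fun A => if A ∈ X then t A else none

/-- A (complete) table satisfies the key `K`: tuple occurrences are pairwise distinct on `K`. -/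
def keyOn (K : Finset α) (T' : Table α V) : Prop := (T'.map (proj K)).Nodup

/-- A (complete) table satisfies the functional dependency `X → Y`. -/
def FD (X Y : Finset α) (T' : Table α V) : Prop :=
  ∀ t1 ∈ T', ∀ t2 ∈ T', agrees X t1 t2 → agrees Y t1 t2

/-- A (complete) table over schema `R` satisfies the multivalued dependency `X ↠ Y`. -/
def MVD (R X Y : Finset α) (T' : Table α V) : Prop :=
  ∀ t1 ∈ T', ∀ t2 ∈ T', agrees X t1 t2 →
    ∃ t ∈ T', agrees (X ∪ Y) t t1 ∧ agrees (X ∪ (R \ Y)) t t2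

/-- A (complete) table satisfies the cross join `X × Y`. -/
def CJ (X Y : Finset α) (T' : Table α V) : Prop :=
  ∀ t1 ∈ T', ∀ t2 ∈ T', ∃ t ∈ T', agrees X t t1 ∧ agrees Y t t2

/-- `K` is a strongly possible key of `T`: `sp⟨K⟩`. -/
def spKey (T : Table α V) (K : Finset α) : Prop :=
  ∃ T', spWorld T T' ∧ keyOn K T'

/-- The strongly possible functional dependency `X →_sp Y` holds in `T`. -/
def spFD (T : Table α V) (X Y : Finset α) : Prop :=
  ∃ T', spWorld T T' ∧ FD X Y T'

/-- The strongly possible multivalued dependency `X ↠_sp Y` holds in `T` over schema `R`. -/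
def spMVD (R : Finset α) (T : Table α V) (X Y : Finset α) : Prop :=
  ∃ T', spWorld T T' ∧ MVD R X Y T'

/-- The strongly possible cross join `X ×_sp Y` holds in `T`. -/
def spCJ (T : Table α V) (X Y : Finset α) : Prop :=
  ∃ T', spWorld T T' ∧ CJ X Y T'

/-- Lien's null multivalued dependency `X ↠ Y` over schema `R`. -/
def NMVD (R : Finset α) (T : Table α V) (X Y : Finset α) : Prop :=
  ∀ t1 ∈ T, ∀ t2 ∈ T, isTotal X t1 → isTotal X t2 → agrees X t1 t2 →
    ∃ t ∈ T, agrees (X ∪ Y) t t1 ∧ agrees (X ∪ (R \ Y)) t t2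

/-- The minimum number of tuples whose removal from `T` makes `P` hold
(`T = T₀ + S` means that `S` is a submultiset of `T` and `T₀ = T ∖ S`). -/
noncomputable def g3Card (T : Table α V) (P : Table α V → Prop) : ℕ :=
  sInf {n : ℕ | ∃ T₀ S : Table α V, T = T₀ + S ∧ P T₀ ∧ Multiset.card S = n}

/-- `g3`: the minimum, over submultisets `S` of `T` whose removal makes the
constraint `P` hold, of `|S|/|T|`. -/
noncomputable def g3 (T : Table α V) (P : Table α V → Prop) : ℚ :=
  (g3Card T P : ℚ) / (Multiset.card T : ℚ)

/-- The minimum number of tuples whose addition to `T` makes `P` hold. -/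
noncomputable def g5Card (T : Table α V) (P : Table α V → Prop) : ℕ :=
  sInf {n : ℕ | ∃ S : Table α V, P (T + S) ∧ Multiset.card S = n}

/-- `g5`: the minimum, over finite multisets `S` of tuples whose addition makes
the constraint `P` hold, of `|S|/|T|`. -/
noncomputable def g5 (T : Table α V) (P : Table α V → Prop) : ℚ :=
  (g5Card T P : ℚ) / (Multiset.card T : ℚ)

end SPDB

/- The reduction has one tuple per vertex `i`: its `X`-value is `i`, and in column `j` it holds
`1` if `i = j`, `⊥` if `i ~ j` and `0` otherwise. Because `X` is a total key, a strongly possible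
world satisfies `X × Y` only if all its tuples agree on `Y`; hence `{X} ×_sp Y` holds in a
subtable exactly when its tuples are pairwise weakly similar on `Y`, i.e. when its vertices form
a clique. So `n - k` removals suffice iff `G` has a clique with at least `k` vertices. -/

namespace SPDB

variable {α V : Type}

lemma mem_VD [DecidableEq V] {T : Table α V} {A : α} {v : V} :
    v ∈ VD T A ↔ ∃ t ∈ T, t A = some v := by
  simp [VD, Multiset.mem_filterMap]

section CrossJoin

variable {T T' : Table α V} {X Y : Finset α}

lemma spWorld.map_proj_eq [DecidableEq α] [DecidableEq V] (hT' : spWorld T T')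
    (htot : ∀ t ∈ T, isTotal X t) :
    T'.map (proj X) = T.map (proj X) := by
  refine (Multiset.rel_eq.1 (Multiset.rel_map.2 (hT'.mono fun t ht t' _ hext => ?_))).symm
  funext A
  by_cases hA : A ∈ X
  · simp only [proj, if_pos hA, (hext A).1 (htot t ht A hA)]
  · simp only [proj, if_neg hA]

lemma FD_of_keyOn [DecidableEq α] (hkey : keyOn X T') : FD X Y T' :=
  fun t₁ h₁ t₂ h₂ hX => by
  have hproj : proj X t₁ = proj X t₂ := funext fun A => by
    by_cases hA : A ∈ X
    · simp only [proj, if_pos hA, hX A hA]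
    · simp only [proj, if_neg hA]
  rw [Multiset.inj_on_of_nodup_map hkey t₁ h₁ t₂ h₂ hproj]
  exact fun _ _ => rfl

lemma CJ.agrees_of_FD (hCJ : CJ X Y T') (hFD : FD X Y T') :
    ∀ t₁ ∈ T', ∀ t₂ ∈ T', agrees Y t₁ t₂ := fun t₁ h₁ t₂ h₂ A hA => by
  obtain ⟨t, ht, htX, htY⟩ := hCJ t₁ h₁ t₂ h₂
  rw [← hFD t ht t₁ h₁ htX A hA, htY A hA]

lemma weakSim_of_spCJ [DecidableEq α] [DecidableEq V] (hkey : keyOn X T)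
    (htot : ∀ t ∈ T, isTotal X t) (h : spCJ T X Y) :
    ∀ t₁ ∈ T, ∀ t₂ ∈ T, weakSim Y t₁ t₂ := by
  obtain ⟨T', hT', hCJ⟩ := h
  have hkey' : keyOn X T' := by
    rw [keyOn, hT'.map_proj_eq htot]
    exact hkey
  intro t₁ h₁ t₂ h₂ A hA
  by_cases hnull : t₁ A = none ∨ t₂ A = none
  · exact Or.inr hnull
  obtain ⟨hne₁, hne₂⟩ := not_or.1 hnull
  obtain ⟨t₁', h₁', hext₁⟩ := Multiset.exists_mem_of_rel_of_mem hT' h₁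
  obtain ⟨t₂', h₂', hext₂⟩ := Multiset.exists_mem_of_rel_of_mem hT' h₂
  left
  rw [← (hext₁ A).1 hne₁, ← (hext₂ A).1 hne₂]
  exact hCJ.agrees_of_FD (FD_of_keyOn hkey') t₁' h₁' t₂' h₂' A hA

noncomputable def fillNulls [DecidableEq V] (T : Table α V) (t : Tuple α V) : Tuple α V :=
  fun A =>
    if t A = none then (if h : (VD T A).Nonempty then some h.choose else none) else t A

lemma spExt_fillNulls [DecidableEq V] (T : Table α V) (t : Tuple α V) :
    spExt T t (fillNulls T t) := by
  intro A
  refine ⟨fun hA => if_neg hA, fun hA => ?_⟩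
  split_ifs with hVD
  · exact ⟨hVD.choose, hVD.choose_spec, by simp only [fillNulls, if_pos hA, dif_pos hVD]⟩
  · simp only [fillNulls, if_pos hA, dif_neg hVD]

lemma spWorld_map_fillNulls [DecidableEq V] (T : Table α V) : spWorld T (T.map (fillNulls T)) :=
  Multiset.rel_map_right.2 (Multiset.rel_refl_of_refl_on fun t _ => spExt_fillNulls T t)

lemma eq_of_mem_VD_of_weakSim [DecidableEq V] (hsim : ∀ t₁ ∈ T, ∀ t₂ ∈ T, weakSim Y t₁ t₂)
    {A : α} (hA : A ∈ Y) {v w : V} (hv : v ∈ VD T A) (hw : w ∈ VD T A) : v = w := by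
  obtain ⟨t₁, h₁, hv⟩ := mem_VD.1 hv
  obtain ⟨t₂, h₂, hw⟩ := mem_VD.1 hw
  rcases hsim t₁ h₁ t₂ h₂ A hA with h | h | h <;> simp_all

lemma fillNulls_eq_of_weakSim [DecidableEq V] (hsim : ∀ t₁ ∈ T, ∀ t₂ ∈ T, weakSim Y t₁ t₂)
    {A : α} (hA : A ∈ Y) {t : Tuple α V} (ht : t ∈ T) {v : V} (hv : v ∈ VD T A) :
    fillNulls T t A = some v := by
  have hVD : (VD T A).Nonempty := ⟨v, hv⟩
  by_cases hnull : t A = none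
  · rw [fillNulls, if_pos hnull, dif_pos hVD,
      eq_of_mem_VD_of_weakSim hsim hA hVD.choose_spec hv]
  · obtain ⟨w, hw⟩ := Option.ne_none_iff_exists'.1 hnull
    rw [fillNulls, if_neg hnull, hw,
      eq_of_mem_VD_of_weakSim hsim hA (mem_VD.2 ⟨t, ht, hw⟩) hv]

/-- Pairwise weak similarity on `Y` leaves at most one value per column of `Y`, so filling the
nulls makes every tuple agree on `Y`. -/
lemma spCJ_of_weakSim [DecidableEq V] (hsim : ∀ t₁ ∈ T, ∀ t₂ ∈ T, weakSim Y t₁ t₂) :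
    spCJ T X Y := by
  refine ⟨_, spWorld_map_fillNulls T, ?_⟩
  rintro _ hm₁ _ hm₂
  obtain ⟨t₁, h₁, rfl⟩ := Multiset.mem_map.1 hm₁
  obtain ⟨t₂, h₂, rfl⟩ := Multiset.mem_map.1 hm₂
  refine ⟨fillNulls T t₁, Multiset.mem_map_of_mem _ h₁, fun _ _ => rfl, fun A hA => ?_⟩
  by_cases hVD : (VD T A).Nonempty
  · rw [fillNulls_eq_of_weakSim hsim hA h₁ hVD.choose_spec,
      fillNulls_eq_of_weakSim hsim hA h₂ hVD.choose_spec]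
  · have hnull : ∀ t ∈ T, t A = none := fun t ht => by
      by_contra hne
      obtain ⟨w, hw⟩ := Option.ne_none_iff_exists'.1 hne
      exact hVD ⟨w, mem_VD.2 ⟨t, ht, hw⟩⟩
    simp only [fillNulls, hnull t₁ h₁, hnull t₂ h₂]

theorem spCJ_iff_weakSim [DecidableEq α] [DecidableEq V] (hkey : keyOn X T)
    (htot : ∀ t ∈ T, isTotal X t) :
    spCJ T X Y ↔ ∀ t₁ ∈ T, ∀ t₂ ∈ T, weakSim Y t₁ t₂ :=
  ⟨weakSim_of_spCJ hkey htot, spCJ_of_weakSim⟩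

end CrossJoin

lemma g3Card_add_le_card_iff {T : Table α V} {P : Table α V → Prop} (h0 : P 0) {k : ℕ} :
    g3Card T P + k ≤ Multiset.card T ↔ ∃ T₀ ≤ T, P T₀ ∧ k ≤ Multiset.card T₀ := by
  constructor
  · intro hk
    have hmem : Multiset.card T ∈ {m : ℕ | ∃ T₀ S : Table α V,
        T = T₀ + S ∧ P T₀ ∧ Multiset.card S = m} := ⟨0, T, (zero_add T).symm, h0, rfl⟩
    obtain ⟨T₀, S, hT, hP, hS⟩ := Nat.sInf_mem ⟨_, hmem⟩
    refine ⟨T₀, Multiset.le_iff_exists_add.2 ⟨S, hT⟩, hP, ?_⟩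
    have hcard := congrArg Multiset.card hT
    rw [Multiset.card_add] at hcard
    unfold g3Card at hk
    omega
  · rintro ⟨T₀, hle, hP, hk⟩
    obtain ⟨S, hT⟩ := Multiset.le_iff_exists_add.1 hle
    have hS : g3Card T P ≤ Multiset.card S := Nat.sInf_le ⟨T₀, S, hT, hP, rfl⟩
    have hcard := congrArg Multiset.card hT
    rw [Multiset.card_add] at hcard
    omega

end SPDB

lemma Multiset.exists_finset_eq_map_of_le {ι β : Type*} [Fintype ι] {f : ι → β}
    (hf : Function.Injective f) {T₀ : Multiset β} (h : T₀ ≤ Finset.univ.val.map f) :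
    ∃ I : Finset ι, T₀ = I.val.map f := by
  have hnd : T₀.Nodup := Multiset.nodup_of_le h (Finset.univ.nodup.map hf)
  obtain ⟨I, -, hI⟩ := Finset.subset_map_iff.1
    (show (⟨T₀, hnd⟩ : Finset β) ⊆ Finset.univ.map ⟨f, hf⟩ from fun x hx => by
      simpa using Multiset.mem_of_le h hx)
  exact ⟨I, congrArg Finset.val hI⟩

lemma Nat.cast_div_le_one_sub_cast_div_iff {K : Type*} [Field K] [LinearOrder K]
    [IsStrictOrderedRing K] {a b n : ℕ} (hn : 0 < n) : (a : K) / n ≤ 1 - b / n ↔ a + b ≤ n := by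
  have hnK : (0 : K) < n := Nat.cast_pos.2 hn
  rw [one_sub_div hnK.ne', div_le_div_iff_of_pos_right hnK, le_sub_iff_add_le]
  exact_mod_cast Iff.rfl

namespace SPDB

variable {n : ℕ} (G : SimpleGraph (Fin n))

open Classical in
noncomputable def graphTuple (i : Fin n) : Tuple (Unit ⊕ Fin n) ℕ
  | .inl _ => some i.val
  | .inr j => if i = j then some 1 else if G.Adj i j then none else some 0

lemma graphTuple_inl_injective : Function.Injective fun i => graphTuple G i (Sum.inl ()) :=
  fun _ _ h => Fin.val_injective (Option.some.inj h)

lemma weakSim_graphTuple_iff {i j : Fin n} (hij : i ≠ j) :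
    weakSim (Finset.univ.image Sum.inr) (graphTuple G i) (graphTuple G j) ↔ G.Adj i j := by
  constructor
  · intro hsim
    by_contra hadj
    have := hsim (Sum.inr j) (Finset.mem_image_of_mem _ (Finset.mem_univ j))
    simp [graphTuple, hij, hadj] at this
  · intro hadj A hA
    obtain ⟨c, -, rfl⟩ := Finset.mem_image.1 hA
    have hadj' := hadj.symm
    simp only [graphTuple]
    split_ifs <;> simp_all

lemma spCJ_graphTuple_iff_isClique (I : Finset (Fin n)) :
    spCJ (I.val.map (graphTuple G)) {Sum.inl ()} (Finset.univ.image Sum.inr) ↔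
      G.IsClique (I : Set (Fin n)) := by
  have hkey : keyOn {Sum.inl ()} (I.val.map (graphTuple G)) := by
    rw [keyOn, Multiset.map_map]
    refine I.nodup.map fun i j h => graphTuple_inl_injective G ?_
    simpa [proj] using congrFun h (Sum.inl ())
  have htot : ∀ t ∈ I.val.map (graphTuple G), isTotal {Sum.inl ()} t := by
    simp [isTotal, graphTuple]
  rw [spCJ_iff_weakSim hkey htot]
  simp only [Multiset.forall_mem_map_iff, Finset.mem_val]
  refine forall₂_congr fun i _ => forall₂_congr fun j _ => ?_
  by_cases hij : i = j
  · simp [hij, weakSim]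
  · simp [hij, weakSim_graphTuple_iff G hij]

end SPDB

open SPDB in
/-- for every graph `G` on `n` vertices and `1 ≤ k ≤ n` there is a table
of `n` tuples over the `(n+1)`-attribute schema `{X} ∪ Y` whose `X`-column consists of
`n` pairwise distinct non-null values, such that `G` has a clique of size `k` iff
`g3({X} ×_sp Y) ≤ 1 - k/n`. -/
theorem statement10 (n k : ℕ) (hk1 : 1 ≤ k) (hkn : k ≤ n) (G : SimpleGraph (Fin n)) :
    ∃ ts : Fin n → Tuple (Unit ⊕ Fin n) ℕ,
      (∀ i, ts i (Sum.inl ()) ≠ none) ∧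
      (Function.Injective fun i => ts i (Sum.inl ())) ∧
      ((∃ s : Finset (Fin n), G.IsNClique k s) ↔
        g3 (Multiset.map ts Finset.univ.val)
            (fun U => spCJ U ({Sum.inl ()} : Finset (Unit ⊕ Fin n))
              (Finset.univ.image Sum.inr)) ≤ 1 - (k : ℚ) / (n : ℚ)) := by
  refine ⟨graphTuple G, fun _ => Option.some_ne_none _, graphTuple_inl_injective G, ?_⟩
  have hcard : Multiset.card (Finset.univ.val.map (graphTuple G)) = n := by simp
  have hg3Card := g3Card_add_le_card_iff (T := Finset.univ.val.map (graphTuple G))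
    (P := fun U => spCJ U {Sum.inl ()} (Finset.univ.image Sum.inr))
    (spCJ_of_weakSim (by simp)) (k := k)
  rw [hcard] at hg3Card
  rw [g3, hcard, Nat.cast_div_le_one_sub_cast_div_iff (hk1.trans hkn), hg3Card]
  constructor
  · rintro ⟨s, hs⟩
    refine ⟨s.val.map (graphTuple G), Multiset.map_le_map (Finset.val_le_iff.2 s.subset_univ),
      (spCJ_graphTuple_iff_isClique G s).2 hs.isClique, ?_⟩
    simp [hs.card_eq]
  · rintro ⟨T₀, hle, hT₀, hk⟩
    obtain ⟨I, rfl⟩ := Multiset.exists_finset_eq_map_of_le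
      (fun _ _ h => graphTuple_inl_injective G (congrFun h (Sum.inl ()))) hle
    obtain ⟨s, hsI, hs⟩ := Finset.exists_subset_card_eq (show k ≤ I.card by simpa using hk)
    exact ⟨s, ((spCJ_graphTuple_iff_isClique G I).1 hT₀).subset (by simpa using hsI), hs⟩
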